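/- Suppose m and n are positive integers with n even and m even. Then no Möbius tour exists on the m×n Klein bottle board: there is no closed knight's tour on K(m,n) whose lift to Z² starting at (0,0) ends at (m-1,n) or (m-1,-n). -/

import Mathlib

/-- The knight's move graph on `ℤ × ℤ`. -/
def knightGraph : SimpleGraph (ℤ × ℤ) where
  Adj p q := (|p.1 - q.1| = 1 ∧ |p.2 - q.2| = 2) ∨ (|p.1 - q.1| = 2 ∧ |p.2 - q.2| = 1)
  symm := by
    constructor
    intro p q h
    rcases h with ⟨h1, h2⟩ | ⟨h1, h2⟩
    · exact Or.inl ⟨by rw [abs_sub_comm]; exact h1, by rw [abs_sub_comm]; exact h2⟩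
    · exact Or.inr ⟨by rw [abs_sub_comm]; exact h1, by rw [abs_sub_comm]; exact h2⟩
  loopless := by
    constructor
    intro p h
    rcases h with ⟨h1, _⟩ | ⟨h1, _⟩ <;> simp at h1

/-- The covering map from the plane (or the width-`m` strip) to the `m × n`
Möbius strip / Klein bottle board: `(a,b) ↦ ((-1)^(b div n) · a mod m, b mod n)`. -/
def phi (m n : ℕ) (p : ℤ × ℤ) : ℤ × ℤ :=
  ((if Even (p.2 / (n : ℤ)) then p.1 else -p.1) % (m : ℤ), p.2 % (n : ℤ))

/-- The `m × n` board, as a set of integer points. -/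
def boardSet (m n : ℕ) : Set (ℤ × ℤ) :=
  {p | 0 ≤ p.1 ∧ p.1 < (m : ℤ) ∧ 0 ≤ p.2 ∧ p.2 < (n : ℤ)}

lemma knight_adj_parity {p q : ℤ × ℤ} (h : knightGraph.Adj p q) :
    ((q.1 + q.2) - (p.1 + p.2)) % 2 = 1 := by
  rcases h with ⟨h1, h2⟩ | ⟨h1, h2⟩ <;>
    rcases abs_eq (by norm_num : (0:ℤ) ≤ 1) |>.mp ‹_› with h1' | h1' <;>
    rcases abs_eq (by norm_num : (0:ℤ) ≤ 2) |>.mp ‹_› with h2' | h2' <;> omega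

lemma knight_walk_parity : ∀ {u v : ℤ × ℤ} (w : knightGraph.Walk u v),
    ((v.1 + v.2) - (u.1 + u.2)) % 2 = (w.length : ℤ) % 2 := by
  intro u v w
  induction w with
  | nil => simp
  | cons h w ih =>
    have := knight_adj_parity h
    simp only [SimpleGraph.Walk.length_cons]
    push_cast
    omega

/-- For `m` and `n` both even and positive, there is no Möbius tour on the `m × n` Klein
bottle board: no closed knight's tour of `K(m,n)` whose lift to `ℤ²` starting at `(0,0)`
ends at `(m-1, ±n)`. -/
theorem klein_no_mobius_tour_of_even_even (m n : ℕ) (hm : Even m) (hn : Even n)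
    (hm0 : 0 < m) (hn0 : 0 < n) :
    ¬ ∃ (e : ℤ × ℤ) (w : knightGraph.Walk ((0 : ℤ), (0 : ℤ)) e),
      (e = ((m : ℤ) - 1, (n : ℤ)) ∨ e = ((m : ℤ) - 1, -(n : ℤ))) ∧
      w.length = m * n ∧
      ∀ q ∈ boardSet m n, ∃! i : Fin (m * n), phi m n (w.getVert i) = q := by
  rintro ⟨e, w, he, hlen, -⟩
  have hp := knight_walk_parity w
  rw [hlen] at hp
  obtain ⟨k, hk⟩ : Even (m * n) := hm.mul_right n
  obtain ⟨m', hm'⟩ := hm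
  obtain ⟨n', hn'⟩ := hn
  rw [hk] at hp
  rcases he with rfl | rfl <;>
    (simp only at hp; push_cast [hm', hn'] at hp; omega)
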